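/- Let β > 0, b ∈ ℝⁿ with |b| ≤ 1/8, M a symmetric n×n matrix with M e_n = 0 and ‖M‖ ≤ 1/8, and define W(x) = β(1 + b·x)(x_n − ½ xᵀMx). Then for all x ∈ B_{1/2} one has ∂_n W(x) ≥ β/2. Consequently, for any s ∈ (0, 1/4) and any continuous function u on B_{1/2} with |u − W| ≤ βs/4 on B_{1/4}, one has W(x − s e_n) ≤ u(x) ≤ W(x + s e_n) for all x ∈ B_{1/8}. -/

import Mathlib

/-!
Along the line `t ↦ x + t eₙ` the quadratic form `xᵀMx` is constant (as `M` is symmetric with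
`M eₙ = 0`), so `W` restricts to the quadratic polynomial `β (1 + b·x + t bₙ)(x_n − ½xᵀMx + t)`.
Its derivative is `β` times a factor that stays `≥ 1/2` on `B_{1/2}`, because `b` and `M` are
small. A quadratic polynomial increases over `[0, s]` by `s` times its slope at `s/2`, so moving
by `± s eₙ` changes `W` by at least `βs/2 > βs/4`, which beats the distance from `u` to `W`.
-/

open Matrix

/-- The Euclidean norm of a vector in `Fin m → ℝ`. -/
noncomputable def nrm {m : ℕ} (v : Fin m → ℝ) : ℝ := Real.sqrt (v ⬝ᵥ v)

section Nrm

variable {m : ℕ}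

lemma nrm_eq_norm_toLp (v : Fin m → ℝ) :
    nrm v = ‖(WithLp.toLp 2 v : EuclideanSpace ℝ (Fin m))‖ := by
  rw [EuclideanSpace.norm_eq]
  simp [nrm, dotProduct, sq]

lemma abs_dotProduct_le_nrm_mul_nrm (v w : Fin m → ℝ) : |v ⬝ᵥ w| ≤ nrm v * nrm w := by
  have h := abs_real_inner_le_norm (WithLp.toLp 2 w : EuclideanSpace ℝ (Fin m)) (WithLp.toLp 2 v)
  rwa [EuclideanSpace.inner_toLp_toLp, star_trivial, ← nrm_eq_norm_toLp, ← nrm_eq_norm_toLp,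
    mul_comm (nrm w)] at h

lemma abs_apply_le_nrm (v : Fin m → ℝ) (i : Fin m) : |v i| ≤ nrm v := by
  rw [nrm_eq_norm_toLp]
  exact PiLp.norm_apply_le (WithLp.toLp 2 v : EuclideanSpace ℝ (Fin m)) i

lemma nrm_add_smul_single_le (x : Fin m → ℝ) (t : ℝ) (i : Fin m) :
    nrm (x + t • Pi.single i 1) ≤ nrm x + |t| := by
  have hsingle : ‖(WithLp.toLp 2 (t • Pi.single i 1) : EuclideanSpace ℝ (Fin m))‖ = |t| := by
    simp [norm_smul]
  simp only [nrm_eq_norm_toLp, WithLp.toLp_add, ← hsingle]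
  exact norm_add_le _ _

end Nrm

noncomputable section QuadW

variable {n : ℕ} (β : ℝ) (b : Fin (n + 1) → ℝ) (M : Matrix (Fin (n + 1)) (Fin (n + 1)) ℝ)

def paraboloidHeight (x : Fin (n + 1) → ℝ) : ℝ :=
  x (Fin.last n) - 1 / 2 * (x ⬝ᵥ M *ᵥ x)

def quadW (x : Fin (n + 1) → ℝ) : ℝ :=
  β * (1 + b ⬝ᵥ x) * paraboloidHeight M x

def slopeFactor (x : Fin (n + 1) → ℝ) : ℝ :=
  1 + b ⬝ᵥ x + b (Fin.last n) * paraboloidHeight M x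

variable {M}

lemma dotProduct_mulVec_add_smul_of_mulVec_eq_zero {ι R : Type*} [Fintype ι] [CommRing R]
    {A : Matrix ι ι R} (hA : A.IsSymm) {e : ι → R} (he : A *ᵥ e = 0) (x : ι → R) (t : R) :
    (x + t • e) ⬝ᵥ A *ᵥ (x + t • e) = x ⬝ᵥ A *ᵥ x := by
  have hcross : e ⬝ᵥ A *ᵥ x = 0 := by
    rw [dotProduct_mulVec, ← hA, vecMul_transpose, he, zero_dotProduct]
  simp [mulVec_add, mulVec_smul, he, add_dotProduct, smul_dotProduct, hcross]

lemma paraboloidHeight_add_smul_last (hM : M.IsSymm) (hMe : M *ᵥ Pi.single (Fin.last n) 1 = 0)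
    (x : Fin (n + 1) → ℝ) (t : ℝ) :
    paraboloidHeight M (x + t • Pi.single (Fin.last n) 1) = paraboloidHeight M x + t := by
  simp only [paraboloidHeight, dotProduct_mulVec_add_smul_of_mulVec_eq_zero hM hMe]
  simp only [Pi.add_apply, Pi.smul_apply, Pi.single_eq_same, smul_eq_mul, mul_one]
  ring

lemma quadW_add_smul_last (hM : M.IsSymm) (hMe : M *ᵥ Pi.single (Fin.last n) 1 = 0)
    (x : Fin (n + 1) → ℝ) (t : ℝ) :
    quadW β b M (x + t • Pi.single (Fin.last n) 1) =
      β * ((1 + b ⬝ᵥ x + t * b (Fin.last n)) * (paraboloidHeight M x + t)) := by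
  rw [quadW, paraboloidHeight_add_smul_last hM hMe, dotProduct_add, dotProduct_smul,
    dotProduct_single, smul_eq_mul, mul_one]
  ring

lemma hasDerivAt_quadW_add_smul_last (hM : M.IsSymm)
    (hMe : M *ᵥ Pi.single (Fin.last n) 1 = 0) (x : Fin (n + 1) → ℝ) :
    HasDerivAt (fun t : ℝ => quadW β b M (x + t • Pi.single (Fin.last n) 1))
      (β * slopeFactor b M x) 0 := by
  rw [funext (quadW_add_smul_last β b hM hMe x)]
  have hline : HasDerivAt (fun t : ℝ => 1 + b ⬝ᵥ x + t * b (Fin.last n)) (b (Fin.last n)) 0 := by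
    simpa using ((hasDerivAt_id (0 : ℝ)).mul_const (b (Fin.last n))).const_add (1 + b ⬝ᵥ x)
  have hheight : HasDerivAt (fun t : ℝ => paraboloidHeight M x + t) 1 0 :=
    (hasDerivAt_id (0 : ℝ)).const_add _
  exact ((hline.mul hheight).const_mul β).congr_deriv (by rw [slopeFactor]; ring)

lemma quadW_add_smul_last_sub (hM : M.IsSymm) (hMe : M *ᵥ Pi.single (Fin.last n) 1 = 0)
    (x : Fin (n + 1) → ℝ) (s : ℝ) :
    quadW β b M (x + s • Pi.single (Fin.last n) 1) - quadW β b M x =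
      β * s * slopeFactor b M (x + (s / 2) • Pi.single (Fin.last n) 1) := by
  have hx : quadW β b M x = quadW β b M (x + (0 : ℝ) • Pi.single (Fin.last n) 1) := by simp
  rw [hx, quadW_add_smul_last β b hM hMe, quadW_add_smul_last β b hM hMe, slopeFactor,
    paraboloidHeight_add_smul_last hM hMe, dotProduct_add, dotProduct_smul, dotProduct_single,
    smul_eq_mul, mul_one]
  ring

lemma abs_paraboloidHeight_le (hMK : ∀ v, nrm (M *ᵥ v) ≤ 1 / 8 * nrm v)
    (x : Fin (n + 1) → ℝ) :
    |paraboloidHeight M x| ≤ nrm x + nrm x ^ 2 / 16 := by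
  have hquad : |x ⬝ᵥ M *ᵥ x| ≤ nrm x ^ 2 / 8 :=
    calc |x ⬝ᵥ M *ᵥ x| ≤ nrm x * nrm (M *ᵥ x) := abs_dotProduct_le_nrm_mul_nrm _ _
      _ ≤ nrm x * (1 / 8 * nrm x) := mul_le_mul_of_nonneg_left (hMK x) (Real.sqrt_nonneg _)
      _ = nrm x ^ 2 / 8 := by ring
  calc |paraboloidHeight M x| ≤ |x (Fin.last n)| + 1 / 2 * |x ⬝ᵥ M *ᵥ x| := by
        refine (abs_sub _ _).trans_eq ?_
        rw [abs_mul, abs_of_pos (by norm_num : (0 : ℝ) < 1 / 2)]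
    _ ≤ nrm x + nrm x ^ 2 / 16 := by linarith [abs_apply_le_nrm x (Fin.last n)]

lemma half_le_slopeFactor (hb : nrm b ≤ 1 / 8) (hMK : ∀ v, nrm (M *ᵥ v) ≤ 1 / 8 * nrm v)
    {x : Fin (n + 1) → ℝ} (hx : nrm x < 1 / 2) :
    1 / 2 ≤ slopeFactor b M x := by
  have hx0 : 0 ≤ nrm x := Real.sqrt_nonneg _
  have hbx : |b ⬝ᵥ x| ≤ 1 / 16 :=
    (abs_dotProduct_le_nrm_mul_nrm b x).trans (by nlinarith)
  have hbB : |b (Fin.last n) * paraboloidHeight M x| ≤ 1 / 8 * (1 / 2 + 1 / 64) := by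
    rw [abs_mul]
    exact mul_le_mul ((abs_apply_le_nrm b _).trans hb)
      ((abs_paraboloidHeight_le hMK x).trans (by nlinarith)) (abs_nonneg _) (by norm_num)
  rw [slopeFactor]
  linarith [neg_abs_le (b ⬝ᵥ x), neg_abs_le (b (Fin.last n) * paraboloidHeight M x)]

end QuadW

/-- Nondegeneracy of `W(x) = β(1 + b·x)(x_n − ½xᵀMx)` in the `e_n` direction
(`∂_n W ≥ β/2` in `B_{1/2}`) and the resulting trapping of any `u` that is
`βs/4`-close to `W` between the `e_n`-translates `W(x ∓ s e_n)`. -/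
theorem stmt9 {n : ℕ} (β s : ℝ) (hβ : 0 < β) (b : Fin (n + 1) → ℝ) (hb : nrm b ≤ 1 / 8)
    (M : Matrix (Fin (n + 1)) (Fin (n + 1)) ℝ) (hM : M.IsSymm)
    (hMe : M.mulVec (Pi.single (Fin.last n) 1) = 0)
    (hMK : ∀ v : Fin (n + 1) → ℝ, nrm (M.mulVec v) ≤ (1 / 8) * nrm v)
    (W : (Fin (n + 1) → ℝ) → ℝ)
    (hW : ∀ x, W x = β * (1 + b ⬝ᵥ x) * (x (Fin.last n) - (1 / 2) * (x ⬝ᵥ M.mulVec x))) :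
    (∀ x : Fin (n + 1) → ℝ, nrm x < 1 / 2 →
      β / 2 ≤ deriv (fun t : ℝ => W (x + t • (Pi.single (Fin.last n) 1 : Fin (n + 1) → ℝ))) 0) ∧
    (0 < s → s < 1 / 4 → ∀ u : (Fin (n + 1) → ℝ) → ℝ, Continuous u →
      (∀ x : Fin (n + 1) → ℝ, nrm x ≤ 1 / 4 → |u x - W x| ≤ β * s / 4) →
      ∀ x : Fin (n + 1) → ℝ, nrm x ≤ 1 / 8 →
        W (x - s • (Pi.single (Fin.last n) 1 : Fin (n + 1) → ℝ)) ≤ u x ∧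
        u x ≤ W (x + s • (Pi.single (Fin.last n) 1 : Fin (n + 1) → ℝ))) := by
  obtain rfl : W = quadW β b M := funext hW
  refine ⟨fun x hx => ?_, fun hs hs4 u _ hclose x hx => ?_⟩
  · rw [(hasDerivAt_quadW_add_smul_last β b hM hMe x).deriv]
    nlinarith [half_le_slopeFactor b hb hMK hx]
  set e : Fin (n + 1) → ℝ := Pi.single (Fin.last n) 1
  have hstep : ∀ y, nrm y + s / 2 < 1 / 2 →
      quadW β b M y + β * s / 2 ≤ quadW β b M (y + s • e) := by
    intro y hy
    have hmid := (nrm_add_smul_single_le y (s / 2) (Fin.last n)).trans_lt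
      (by rwa [abs_of_pos (half_pos hs)])
    have := quadW_add_smul_last_sub β b hM hMe y s
    nlinarith [half_le_slopeFactor b hb hMK hmid, mul_pos hβ hs]
  have hxs : nrm (x - s • e) ≤ nrm x + s := by
    simpa [sub_eq_add_neg, ← neg_smul, abs_of_pos hs] using nrm_add_smul_single_le x (-s) _
  have hux := abs_le.mp (hclose x (by linarith))
  constructor
  · have := hstep (x - s • e) (by linarith)
    rw [sub_add_cancel] at this
    linarith
  · have := hstep x (by linarith)
    linarith
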